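/- There is a natural isomorphism of R-modules F_M(a,b) ⊗_R F_N(c,d) ≅ F^{[2]}_{M⊗N}((a,b)⊗(c,d)), induced by (x_n) ⊗ (y_k) ↦ (x_n ⊗ y_k)_{n,k≥0}, compatible with the horizontal and vertical shift operators. -/

import Mathlib

open TensorProduct

variable (R M N : Type*) [CommRing R] [AddCommGroup M] [Module R M]
  [AddCommGroup N] [Module R N]

/-- `F_M(a,b)`: Fibonacci sequences of type `(a,b)` in the `R`-module `M`. -/
def fibSubmodule (a b : R) : Submodule R (ℕ → M) where
  carrier := {x | ∀ n, x (n + 2) = a • x (n + 1) + b • x n}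
  add_mem' := by
    intro x y hx hy n
    simp only [Pi.add_apply, hx n, hy n, smul_add]
    abel
  zero_mem' := by intro n; simp
  smul_mem' := by
    intro c x hx n
    simp only [Pi.smul_apply, hx n, smul_add, smul_comm c]

/-- `F^{[2]}_P((a,b)⊗(c,d))`: double Fibonacci sequences in the `R`-module `P`. -/
def fib2Submodule (P : Type*) [AddCommGroup P] [Module R P] (a b c d : R) :
    Submodule R (ℕ → ℕ → P) where
  carrier := {x | (∀ n k, x (n + 2) k = a • x (n + 1) k + b • x n k) ∧
    (∀ n k, x n (k + 2) = c • x n (k + 1) + d • x n k)}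
  add_mem' := by
    rintro x y ⟨hx1, hx2⟩ ⟨hy1, hy2⟩
    constructor <;> intro n k <;>
      simp only [Pi.add_apply, hx1 n k, hy1 n k, hx2 n k, hy2 n k, smul_add] <;> abel
  zero_mem' := by constructor <;> intro n k <;> simp
  smul_mem' := by
    rintro e x ⟨hx1, hx2⟩
    constructor <;> intro n k <;>
      simp only [Pi.smul_apply, hx1 n k, hx2 n k, smul_add, smul_comm e]

section Aux

lemma two_step_induction {P : ℕ → Prop} (h0 : P 0) (h1 : P 1)
    (h : ∀ n, P n → P (n + 1) → P (n + 2)) : ∀ n, P n := by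
  have key : ∀ n, P n ∧ P (n + 1) := by
    intro n
    induction n with
    | zero => exact ⟨h0, h1⟩
    | succ k ih => exact ⟨ih.2, h k ih.1 ih.2⟩
  exact fun n => (key n).1

variable {R M N}

/-- Auxiliary pair-recursion for Fibonacci-type sequences. -/
def fibAux (a b : R) (p : M × M) : ℕ → M × M
  | 0 => p
  | n + 1 => ((fibAux a b p n).2, a • (fibAux a b p n).2 + b • (fibAux a b p n).1)

lemma fibAux_add (a b : R) (p q : M × M) (n : ℕ) :
    fibAux a b (p + q) n = fibAux a b p n + fibAux a b q n := by
  induction n with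
  | zero => rfl
  | succ k ih =>
    simp only [fibAux, ih, Prod.snd_add, Prod.fst_add, smul_add, Prod.mk_add_mk]
    congr 1
    abel

lemma fibAux_smul (a b : R) (r : R) (p : M × M) (n : ℕ) :
    fibAux a b (r • p) n = r • fibAux a b p n := by
  induction n with
  | zero => rfl
  | succ k ih =>
    simp only [fibAux, ih, Prod.smul_snd, Prod.smul_fst, Prod.smul_mk, smul_add,
      smul_comm a r, smul_comm b r]

/-- The Fibonacci-type sequence with initial values `p`. -/
def fibSeq (a b : R) (p : M × M) (n : ℕ) : M := (fibAux a b p n).1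

lemma fibSeq_mem (a b : R) (p : M × M) : fibSeq a b p ∈ fibSubmodule R M a b := by
  intro n
  simp [fibSeq, fibAux]

lemma fib_ext {a b : R} {x y : ℕ → M} (hx : x ∈ fibSubmodule R M a b)
    (hy : y ∈ fibSubmodule R M a b) (h0 : x 0 = y 0) (h1 : x 1 = y 1) : x = y := by
  funext n
  induction n using two_step_induction with
  | h0 => exact h0
  | h1 => exact h1
  | h n ih1 ih2 => rw [hx n, hy n, ih1, ih2]

variable (R M) in
/-- `F_M(a,b) ≃ M × M` via the first two values. -/
def fibEquiv (a b : R) : (fibSubmodule R M a b) ≃ₗ[R] M × M :=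
  LinearEquiv.ofLinear
    { toFun := fun x => ((x : ℕ → M) 0, (x : ℕ → M) 1)
      map_add' := fun _ _ => rfl
      map_smul' := fun _ _ => rfl }
    { toFun := fun p => ⟨fibSeq a b p, fibSeq_mem a b p⟩
      map_add' := fun p q => Subtype.ext (funext fun n => by
        simp [fibSeq, fibAux_add])
      map_smul' := fun r p => Subtype.ext (funext fun n => by
        simp [fibSeq, fibAux_smul]) }
    (by ext p <;> rfl)
    (LinearMap.ext fun x => Subtype.ext (fib_ext (fibSeq_mem a b _) x.2 rfl rfl))

lemma fib2_ext {P : Type*} [AddCommGroup P] [Module R P] {a b c d : R}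
    {x y : ℕ → ℕ → P} (hx : x ∈ fib2Submodule R P a b c d)
    (hy : y ∈ fib2Submodule R P a b c d)
    (h00 : x 0 0 = y 0 0) (h01 : x 0 1 = y 0 1)
    (h10 : x 1 0 = y 1 0) (h11 : x 1 1 = y 1 1) : x = y := by
  obtain ⟨hxh, hxv⟩ := hx
  obtain ⟨hyh, hyv⟩ := hy
  have row0 : ∀ k, x 0 k = y 0 k := by
    intro k
    induction k using two_step_induction with
    | h0 => exact h00
    | h1 => exact h01
    | h k ih1 ih2 => rw [hxv 0 k, hyv 0 k, ih1, ih2]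
  have row1 : ∀ k, x 1 k = y 1 k := by
    intro k
    induction k using two_step_induction with
    | h0 => exact h10
    | h1 => exact h11
    | h k ih1 ih2 => rw [hxv 1 k, hyv 1 k, ih1, ih2]
  funext n
  induction n using two_step_induction with
  | h0 => exact funext row0
  | h1 => exact funext row1
  | h n ih1 ih2 => funext k; rw [hxh n k, hyh n k, ih1, ih2]

variable (R M N) in
/-- The "four corners" linear map. -/
def cornersMap (a b c d : R) :
    (fib2Submodule R (M ⊗[R] N) a b c d) →ₗ[R]
      ((M ⊗[R] N) × (M ⊗[R] N)) × ((M ⊗[R] N) × (M ⊗[R] N)) where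
  toFun z := (((z : ℕ → ℕ → M ⊗[R] N) 0 0, (z : ℕ → ℕ → M ⊗[R] N) 0 1),
    ((z : ℕ → ℕ → M ⊗[R] N) 1 0, (z : ℕ → ℕ → M ⊗[R] N) 1 1))
  map_add' _ _ := rfl
  map_smul' _ _ := rfl

variable (R M N) in
/-- The tensor-to-double-sequence linear map. -/
noncomputable def phiMap (a b c d : R) :
    (fibSubmodule R M a b ⊗[R] fibSubmodule R N c d) →ₗ[R]
      fib2Submodule R (M ⊗[R] N) a b c d :=
  TensorProduct.lift (LinearMap.mk₂ R
    (fun x y => ⟨fun n k => (x : ℕ → M) n ⊗ₜ[R] (y : ℕ → N) k, by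
      constructor <;> intro n k <;> dsimp only
      · rw [show (x : ℕ → M) (n + 2) = a • (x : ℕ → M) (n + 1) + b • (x : ℕ → M) n
          from x.2 n]
        simp [add_tmul, smul_tmul']
      · rw [show (y : ℕ → N) (k + 2) = c • (y : ℕ → N) (k + 1) + d • (y : ℕ → N) k
          from y.2 k]
        simp [tmul_add, tmul_smul]⟩)
    (fun x₁ x₂ y => Subtype.ext (funext fun n => funext fun k => by
      simp [add_tmul]))
    (fun r x y => Subtype.ext (funext fun n => funext fun k => by
      simp [smul_tmul']))
    (fun x y₁ y₂ => Subtype.ext (funext fun n => funext fun k => by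
      simp [tmul_add]))
    (fun r x y => Subtype.ext (funext fun n => funext fun k => by
      simp [tmul_smul])))

variable (R M N) in
/-- The composite equivalence to the four-corner data. -/
noncomputable def equiv4 (a b c d : R) :
    (fibSubmodule R M a b ⊗[R] fibSubmodule R N c d) ≃ₗ[R]
      ((M ⊗[R] N) × (M ⊗[R] N)) × ((M ⊗[R] N) × (M ⊗[R] N)) :=
  (TensorProduct.congr (fibEquiv R M a b) (fibEquiv R N c d)) ≪≫ₗ
    (TensorProduct.prodLeft R R M M (N × N)) ≪≫ₗ
    (LinearEquiv.prodCongr (TensorProduct.prodRight R R M N N) (TensorProduct.prodRight R R M N N))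

lemma equiv4_tmul (a b c d : R) (x : fibSubmodule R M a b) (y : fibSubmodule R N c d) :
    equiv4 R M N a b c d (x ⊗ₜ y) =
      (((x : ℕ → M) 0 ⊗ₜ[R] (y : ℕ → N) 0, (x : ℕ → M) 0 ⊗ₜ[R] (y : ℕ → N) 1),
       ((x : ℕ → M) 1 ⊗ₜ[R] (y : ℕ → N) 0, (x : ℕ → M) 1 ⊗ₜ[R] (y : ℕ → N) 1)) := by
  simp only [equiv4, LinearEquiv.trans_apply, TensorProduct.congr_tmul]
  rfl

lemma corners_phi (a b c d : R) :
    (cornersMap R M N a b c d).comp (phiMap R M N a b c d) =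
      (equiv4 R M N a b c d).toLinearMap := by
  apply TensorProduct.ext'
  intro x y
  rw [LinearMap.comp_apply, LinearEquiv.coe_coe, equiv4_tmul]
  rfl

end Aux

/-- `F_M(a,b) ⊗_R F_N(c,d) ≅ F^{[2]}_{M⊗N}((a,b)⊗(c,d))`,
induced by `(xₙ) ⊗ (y_k) ↦ (xₙ ⊗ y_k)`. -/
theorem fib_tensor_equiv (a b c d : R) :
    ∃ e : (fibSubmodule R M a b ⊗[R] fibSubmodule R N c d) ≃ₗ[R]
        fib2Submodule R (M ⊗[R] N) a b c d,
      ∀ (x : fibSubmodule R M a b) (y : fibSubmodule R N c d) (n k : ℕ),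
        (e (x ⊗ₜ y) : ℕ → ℕ → M ⊗[R] N) n k = (x : ℕ → M) n ⊗ₜ (y : ℕ → N) k := by
  refine ⟨LinearEquiv.ofLinear (phiMap R M N a b c d)
    ((equiv4 R M N a b c d).symm.toLinearMap ∘ₗ cornersMap R M N a b c d) ?_ ?_, ?_⟩
  · refine LinearMap.ext fun z => ?_
    simp only [LinearMap.comp_apply, LinearMap.id_apply, LinearEquiv.coe_coe]
    set w := (equiv4 R M N a b c d).symm (cornersMap R M N a b c d z) with hw
    have hc : cornersMap R M N a b c d (phiMap R M N a b c d w) =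
        cornersMap R M N a b c d z := by
      rw [← LinearMap.comp_apply, corners_phi, hw]
      simp
    refine Subtype.ext ?_
    refine fib2_ext (phiMap R M N a b c d w).2 z.2 ?_ ?_ ?_ ?_
    · exact congrArg (fun t => t.1.1) hc
    · exact congrArg (fun t => t.1.2) hc
    · exact congrArg (fun t => t.2.1) hc
    · exact congrArg (fun t => t.2.2) hc
  · rw [LinearMap.comp_assoc, corners_phi]
    ext z
    simp
  · intro x y n k
    simp only [LinearEquiv.ofLinear_apply, phiMap, TensorProduct.lift.tmul,
      LinearMap.mk₂_apply]
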